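/- If σ is a combinatorial triangulation of the 2-sphere with v ≥ 13 vertices, then tetvol(σ) ≤ 2v − 10. -/
import Mathlib


noncomputable section

/-- A *volume potential* on a vertex type `V` assigns a rational number to each
ordered triple of distinct vertices, with `ρ(A,B,C) = ρ(B,C,A) = -ρ(A,C,B)`. -/
structure VolumePotential (V : Type*) where
  ρ : V → V → V → ℚ
  cyclic : ∀ A B C : V, A ≠ B → A ≠ C → B ≠ C → ρ A B C = ρ B C A
  antisymm : ∀ A B C : V, A ≠ B → A ≠ C → B ≠ C → ρ A B C = -ρ A C B

variable {V : Type*} [DecidableEq V]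

/-- The volume form of a volume potential:
`vol_ρ(A,B,C,D) = ρ(B,C,D) − ρ(A,C,D) + ρ(A,B,D) − ρ(A,B,C)`. -/
def VolumePotential.vol (P : VolumePotential V) (A B C D : V) : ℚ :=
  P.ρ B C D - P.ρ A C D + P.ρ A B D - P.ρ A B C

/-- A volume potential is *good* if its volume form assigns every ordered
4-tuple of distinct vertices volume at most 1. -/
def VolumePotential.Good (P : VolumePotential V) : Prop :=
  ∀ A B C D : V, A ≠ B → A ≠ C → A ≠ D → B ≠ C → B ≠ D → C ≠ D →
    P.vol A B C D ≤ 1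

/-- A 2-chain on `V`: a finitely supported alternating integer-valued function on
ordered triples (this encodes a finitely supported `ℤ`-linear combination of
oriented triangles, an oriented triangle being an ordered triple of distinct
vertices up to even permutation, with orientation reversal acting as negation). -/
def IsChain2 (c : V → V → V → ℤ) : Prop :=
  (∀ A B C, c A B C = -c B A C) ∧ (∀ A B C, c A B C = -c A C B) ∧
  {t : V × V × V | c t.1 t.2.1 t.2.2 ≠ 0}.Finite

/-- A 3-chain on `V`: a finitely supported alternating integer-valued function on
ordered 4-tuples (a finitely supported `ℤ`-linear combination of oriented
tetrahedra). -/
def IsChain3 (c : V → V → V → V → ℤ) : Prop :=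
  (∀ A B C D, c A B C D = -c B A C D) ∧ (∀ A B C D, c A B C D = -c A C B D) ∧
  (∀ A B C D, c A B C D = -c A B D C) ∧
  {t : V × V × V × V | c t.1 t.2.1 t.2.2.1 t.2.2.2 ≠ 0}.Finite

/-- The boundary of a 2-chain, a 1-chain: `∂[A,B,C] = [B,C] − [A,C] + [A,B]`,
extended `ℤ`-linearly. -/
def bdry2 (c : V → V → V → ℤ) : V → V → ℤ := fun B C => ∑ᶠ A, c A B C

/-- The boundary of a 3-chain, a 2-chain:
`∂[A,B,C,D] = [B,C,D] − [A,C,D] + [A,B,D] − [A,B,C]`, extended `ℤ`-linearly. -/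
def bdry3 (c : V → V → V → V → ℤ) : V → V → V → ℤ := fun B C D => ∑ᶠ A, c A B C D

/-- The `ℤ`-linear extension of a volume potential to 2-chains.  (Each oriented
triangle of the chain occurs as 6 ordered triples, 3 with each sign, whence the
division by 6.) -/
def VolumePotential.eval2 (P : VolumePotential V) (c : V → V → V → ℤ) : ℚ :=
  (∑ᶠ t : V × V × V, (c t.1 t.2.1 t.2.2 : ℚ) * P.ρ t.1 t.2.1 t.2.2) / 6

/-- The `ℤ`-linear extension of the volume form to 3-chains. -/
def VolumePotential.eval3 (P : VolumePotential V) (c : V → V → V → V → ℤ) : ℚ :=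
  (∑ᶠ t : V × V × V × V,
    (c t.1 t.2.1 t.2.2.1 t.2.2.2 : ℚ) * P.vol t.1 t.2.1 t.2.2.1 t.2.2.2) / 24

/-- The ℓ¹-norm of a 3-chain: the sum of the absolute values of its coefficients. -/
def l1norm3 (c : V → V → V → V → ℤ) : ℚ :=
  (∑ᶠ t : V × V × V × V, (|c t.1 t.2.1 t.2.2.1 t.2.2.2| : ℚ)) / 24

/-- A *tetration* of a 2-chain `σ` is a 3-chain with all coefficients in `{0,1}`
(i.e. a finite set of oriented tetrahedra, with at most one orientation occurring
per 4-element vertex set — in the alternating-function encoding, all values lie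
in `{-1,0,1}`) whose boundary is `σ`. -/
def IsTetration (σ : V → V → V → ℤ) (τ : V → V → V → V → ℤ) : Prop :=
  IsChain3 τ ∧ (∀ A B C D, τ A B C D = 0 ∨ τ A B C D = 1 ∨ τ A B C D = -1) ∧
  bdry3 τ = σ

/-- `|τ|`: the number of tetrahedra of a `{0,1}`-coefficient 3-chain. -/
def tetCount (τ : V → V → V → V → ℤ) : ℕ :=
  {s : Finset V | ∃ A B C D, τ A B C D ≠ 0 ∧ s = ({A, B, C, D} : Finset V)}.ncard

/-- `tetvol σ`: the minimum number of tetrahedra in a tetration of `σ`. -/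
def tetvol (σ : V → V → V → ℤ) : ℕ :=
  sInf {n | ∃ τ : V → V → V → V → ℤ, IsTetration σ τ ∧ tetCount τ = n}

/-- The faces of a 2-chain: the 3-element vertex sets of the oriented triangles
with nonzero coefficient. -/
def faceSets (σ : V → V → V → ℤ) : Set (Finset V) :=
  {s | ∃ A B C, σ A B C ≠ 0 ∧ s = ({A, B, C} : Finset V)}

/-- The edges of a 2-chain: the 2-element subsets of its faces. -/
def edgeSets (σ : V → V → V → ℤ) : Set (Finset V) :=
  {e | e.card = 2 ∧ ∃ s ∈ faceSets σ, e ⊆ s}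

/-- The degree of a vertex: the number of faces containing it. -/
def deg (σ : V → V → V → ℤ) (a : V) : ℕ := {s ∈ faceSets σ | a ∈ s}.ncard

/-- The maximum vertex degree. -/
def maxdeg (σ : V → V → V → ℤ) : ℕ := sSup {n | ∃ a : V, deg σ a = n}

/-- A *combinatorial triangulation of the 2-sphere* on a finite vertex type `V`:
a 2-chain with all nonzero coefficients `+1` (at most one oriented triangle per
3-element vertex set; in the alternating-function encoding, values in `{-1,0,1}`)
such that every vertex lies in some face, every edge lies in exactly two faces,
`∂σ = 0`, and `v − e + f = 2`. -/
def IsSphereTriangulation [Fintype V] (σ : V → V → V → ℤ) : Prop :=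
  IsChain2 σ ∧
  (∀ A B C, σ A B C = 0 ∨ σ A B C = 1 ∨ σ A B C = -1) ∧
  (∀ a : V, ∃ s ∈ faceSets σ, a ∈ s) ∧
  (∀ e ∈ edgeSets σ, {s ∈ faceSets σ | e ⊆ s}.ncard = 2) ∧
  (∀ B C : V, bdry2 σ B C = 0) ∧
  (Fintype.card V : ℤ) - ((edgeSets σ).ncard : ℤ) + ((faceSets σ).ncard : ℤ) = 2


section ConeAux
variable {V : Type*} [DecidableEq V]

/-- The cone over a 2-chain from an apex `a`. -/
def cone (σ : V → V → V → ℤ) (a : V) : V → V → V → V → ℤ := fun A B C D =>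
  (if A = a then σ B C D else 0) - (if B = a then σ A C D else 0)
    + (if C = a then σ A B D else 0) - (if D = a then σ A B C else 0)

lemma cone_coef (σ : V → V → V → ℤ) (a : V)
    (h12 : ∀ A B C, σ A B C = -σ B A C) (h23 : ∀ A B C, σ A B C = -σ A C B)
    (hc : ∀ A B C, σ A B C = 0 ∨ σ A B C = 1 ∨ σ A B C = -1) (A B C D : V) :
    cone σ a A B C D = 0 ∨ cone σ a A B C D = 1 ∨ cone σ a A B C D = -1 := by
  have z12 : ∀ X Y : V, σ X X Y = 0 := fun X Y => by have := h12 X X Y; omega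
  have z23 : ∀ X Y : V, σ X Y Y = 0 := fun X Y => by have := h23 X Y Y; omega
  have z13 : ∀ X Y : V, σ X Y X = 0 := fun X Y => by
    have h1 := h23 X Y X; have h2 := h12 X X Y; omega
  unfold cone
  by_cases hA : A = a <;> by_cases hB : B = a <;> by_cases hC : C = a <;>
      by_cases hD : D = a <;>
    simp only [hA, hB, hC, hD, eq_self_iff_true, if_true, if_false, z12, z23, z13,
      sub_zero, add_zero, zero_add, zero_sub, sub_self, neg_zero, neg_neg] <;>
    first
      | omega
      | exact Or.inl trivial
      | exact hc _ _ _
      | (rcases hc B C D with h|h|h <;> omega)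
      | (rcases hc A C D with h|h|h <;> omega)
      | (rcases hc A B D with h|h|h <;> omega)
      | (rcases hc A B C with h|h|h <;> omega)
      | (have h := h12 B a D; omega)
      | (have h1 := h23 B C a; have h2 := h12 B a C; omega)
      | (have h := h23 A C a; omega)

lemma cone_chain3 [Fintype V] (σ : V → V → V → ℤ) (a : V)
    (h12 : ∀ A B C, σ A B C = -σ B A C) (h23 : ∀ A B C, σ A B C = -σ A C B) :
    IsChain3 (cone σ a) := by
  refine ⟨?_, ?_, ?_, Set.toFinite _⟩
  · intro A B C D
    unfold cone
    rw [h12 B A D, h12 B A C]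
    split_ifs <;> ring
  · intro A B C D
    unfold cone
    rw [h12 C B D, h23 A C B]
    split_ifs <;> ring
  · intro A B C D
    unfold cone
    rw [h23 B D C, h23 A D C]
    split_ifs <;> ring

lemma cone_bdry [Fintype V] (σ : V → V → V → ℤ) (a : V)
    (hb : ∀ B C, bdry2 σ B C = 0) : bdry3 (cone σ a) = σ := by
  funext B C D
  have hb' : ∀ C D : V, ∑ A : V, σ A C D = 0 := fun C D => by
    have := hb C D; rwa [bdry2, finsum_eq_sum_of_fintype] at this
  show ∑ᶠ A, cone σ a A B C D = σ B C D
  rw [finsum_eq_sum_of_fintype]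
  unfold cone
  by_cases hB : B = a <;> by_cases hC : C = a <;> by_cases hD : D = a <;>
    simp [hB, hC, hD, Finset.sum_sub_distrib, Finset.sum_add_distrib, hb',
      Finset.sum_ite_eq']

end ConeAux

set_option maxHeartbeats 2000000 in
/-- A combinatorial triangulation `σ` of the 2-sphere with `v ≥ 13`
vertices satisfies `tetvol(σ) ≤ 2v − 10`. -/
theorem tetvol_upper_bound {V : Type*} [DecidableEq V] [Fintype V]
    (σ : V → V → V → ℤ) (hσ : IsSphereTriangulation σ) (hv : 13 ≤ Fintype.card V) :
    (tetvol σ : ℤ) ≤ 2 * (Fintype.card V : ℤ) - 10 := by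
  classical
  obtain ⟨⟨h12, h23, -⟩, hcoef, hcover, hedge2, hbdry, heuler⟩ := hσ
  have z12 : ∀ X Y : V, σ X X Y = 0 := fun X Y => by have := h12 X X Y; omega
  have z23 : ∀ X Y : V, σ X Y Y = 0 := fun X Y => by have := h23 X Y Y; omega
  have z13 : ∀ X Y : V, σ X Y X = 0 := fun X Y => by
    have h1 := h23 X Y X; have h2 := h12 X X Y; omega
  have hcard3 : ∀ s ∈ faceSets σ, s.card = 3 := by
    rintro s ⟨A, B, C, hne, rfl⟩
    have hAB : A ≠ B := by rintro rfl; exact hne (z12 A C)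
    have hAC : A ≠ C := by rintro rfl; exact hne (z13 A B)
    have hBC : B ≠ C := by rintro rfl; exact hne (z23 A B)
    exact Finset.card_eq_three.mpr ⟨A, B, C, hAB, hAC, hBC, rfl⟩
  set F : Finset (Finset V) := (faceSets σ).toFinset with hF
  set E : Finset (Finset V) := (edgeSets σ).toFinset with hE
  have hFncard : (faceSets σ).ncard = F.card := Set.ncard_eq_toFinset_card' _
  have hEncard : (edgeSets σ).ncard = E.card := Set.ncard_eq_toFinset_card' _
  have h3 : ∀ s ∈ F, (E.filter (· ⊆ s)).card = 3 := by
    intro s hs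
    rw [hF, Set.mem_toFinset] at hs
    have hps : E.filter (· ⊆ s) = Finset.powersetCard 2 s := by
      ext e
      simp only [Finset.mem_filter, hE, Set.mem_toFinset, Finset.mem_powersetCard]
      constructor
      · rintro ⟨⟨hc2, -⟩, hsub⟩; exact ⟨hsub, hc2⟩
      · rintro ⟨hsub, hc2⟩; exact ⟨⟨hc2, s, hs, hsub⟩, hsub⟩
    rw [hps, Finset.card_powersetCard, hcard3 s hs]; rfl
  have h2 : ∀ e ∈ E, (F.filter (e ⊆ ·)).card = 2 := by
    intro e he
    rw [hE, Set.mem_toFinset] at he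
    have h := hedge2 e he
    rwa [show {s ∈ faceSets σ | e ⊆ s} = ↑(F.filter (e ⊆ ·)) by
        ext s; simp [hF], Set.ncard_coe_finset] at h
  have hdouble : 2 * E.card = 3 * F.card := by
    have hswap : ∑ e ∈ E, (F.filter (e ⊆ ·)).card = ∑ s ∈ F, (E.filter (· ⊆ s)).card := by
      simp_rw [Finset.card_filter]
      exact Finset.sum_comm
    rw [Finset.sum_congr rfl h2, Finset.sum_congr rfl h3] at hswap
    simpa [Finset.sum_const, mul_comm] using hswap
  have hdegF : ∀ b : V, deg σ b = (F.filter (b ∈ ·)).card := by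
    intro b
    rw [deg, show {s ∈ faceSets σ | b ∈ s} = ↑(F.filter (b ∈ ·)) by
      ext s; simp [hF], Set.ncard_coe_finset]
  have hsumdeg : ∑ b : V, deg σ b = 3 * F.card := by
    simp_rw [hdegF, Finset.card_filter]
    rw [Finset.sum_comm]
    have hrow : ∀ s ∈ F, (∑ b : V, if b ∈ s then 1 else 0) = 3 := by
      intro s hs
      rw [hF, Set.mem_toFinset] at hs
      rw [← Finset.card_filter, Finset.filter_univ_mem, hcard3 s hs]
    rw [Finset.sum_congr rfl hrow, Finset.sum_const, smul_eq_mul, mul_comm]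
  have hfcard : (F.card : ℤ) = 2 * (Fintype.card V : ℤ) - 4 := by
    rw [hFncard, hEncard] at heuler
    omega
  have hdeg6 : ∃ b : V, 6 ≤ deg σ b := by
    by_contra hcon
    push_neg at hcon
    have hle : ∑ b : V, deg σ b ≤ ∑ _b : V, 5 :=
      Finset.sum_le_sum fun b _ => by have := hcon b; omega
    rw [hsumdeg, Finset.sum_const, smul_eq_mul, Finset.card_univ] at hle
    omega
  obtain ⟨a, ha⟩ := hdeg6
  have hTet : IsTetration σ (cone σ a) :=
    ⟨cone_chain3 σ a h12 h23, cone_coef σ a h12 h23 hcoef, cone_bdry σ a hbdry⟩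
  have htv : tetvol σ ≤ tetCount (cone σ a) := Nat.sInf_le ⟨cone σ a, hTet, rfl⟩
  obtain ⟨t1, t2, t3, -⟩ := cone_chain3 σ a h12 h23
  have tz12 : ∀ X Z W : V, cone σ a X X Z W = 0 := fun X Z W => by
    have := t1 X X Z W; omega
  have tz23 : ∀ X Y W : V, cone σ a X Y Y W = 0 := fun X Y W => by
    have := t2 X Y Y W; omega
  have tz34 : ∀ X Y Z : V, cone σ a X Y Z Z = 0 := fun X Y Z => by
    have := t3 X Y Z Z; omega
  have tz13 : ∀ X Y W : V, cone σ a X Y X W = 0 := fun X Y W => by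
    have h1 := t2 X Y X W; have h2 := tz12 X Y W; omega
  have tz14 : ∀ X Y Z : V, cone σ a X Y Z X = 0 := fun X Y Z => by
    have h1 := t3 X Y Z X; have h2 := tz13 X Y Z; omega
  have tz24 : ∀ X Y Z : V, cone σ a X Y Z Y = 0 := fun X Y Z => by
    have h1 := t3 X Y Z Y; have h2 := tz23 X Y Z; omega
  have hsub : {s : Finset V | ∃ A B C D, cone σ a A B C D ≠ 0 ∧ s = ({A, B, C, D} : Finset V)} ⊆
      (insert a) '' {s | s ∈ faceSets σ ∧ a ∉ s} := by
    rintro s ⟨A, B, C, D, hne, rfl⟩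
    have dAB : A ≠ B := by rintro rfl; exact hne (tz12 A C D)
    have dAC : A ≠ C := by rintro rfl; exact hne (tz13 A B D)
    have dAD : A ≠ D := by rintro rfl; exact hne (tz14 A B C)
    have dBC : B ≠ C := by rintro rfl; exact hne (tz23 A B D)
    have dBD : B ≠ D := by rintro rfl; exact hne (tz24 A B C)
    have dCD : C ≠ D := by rintro rfl; exact hne (tz34 A B C)
    by_cases hA : A = a
    · have hBa : ¬B = a := fun h => dAB (hA.trans h.symm)
      have hCa : ¬C = a := fun h => dAC (hA.trans h.symm)
      have hDa : ¬D = a := fun h => dAD (hA.trans h.symm)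
      refine ⟨{B, C, D}, ⟨⟨B, C, D, ?_, rfl⟩, ?_⟩, ?_⟩
      · intro h0; exact hne (by simp [cone, hA, hBa, hCa, hDa, h0])
      · intro hmem
        simp only [Finset.mem_insert, Finset.mem_singleton] at hmem
        rcases hmem with h | h | h
        exacts [hBa h.symm, hCa h.symm, hDa h.symm]
      · rw [hA]
    · by_cases hB : B = a
      · have hCa : ¬C = a := fun h => dBC (hB.trans h.symm)
        have hDa : ¬D = a := fun h => dBD (hB.trans h.symm)
        refine ⟨{A, C, D}, ⟨⟨A, C, D, ?_, rfl⟩, ?_⟩, ?_⟩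
        · intro h0; exact hne (by simp [cone, hA, hB, hCa, hDa, h0])
        · intro hmem
          simp only [Finset.mem_insert, Finset.mem_singleton] at hmem
          rcases hmem with h | h | h
          exacts [hA h.symm, hCa h.symm, hDa h.symm]
        · rw [hB]; ext x; simp; tauto
      · by_cases hC : C = a
        · have hDa : ¬D = a := fun h => dCD (hC.trans h.symm)
          refine ⟨{A, B, D}, ⟨⟨A, B, D, ?_, rfl⟩, ?_⟩, ?_⟩
          · intro h0; exact hne (by simp [cone, hA, hB, hC, hDa, h0])
          · intro hmem
            simp only [Finset.mem_insert, Finset.mem_singleton] at hmem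
            rcases hmem with h | h | h
            exacts [hA h.symm, hB h.symm, hDa h.symm]
          · rw [hC]; ext x; simp; tauto
        · by_cases hD : D = a
          · refine ⟨{A, B, C}, ⟨⟨A, B, C, ?_, rfl⟩, ?_⟩, ?_⟩
            · intro h0; exact hne (by simp [cone, hA, hB, hC, hD, h0])
            · intro hmem
              simp only [Finset.mem_insert, Finset.mem_singleton] at hmem
              rcases hmem with h | h | h
              exacts [hA h.symm, hB h.symm, hC h.symm]
            · rw [hD]; ext x; simp; tauto
          · exact absurd (by simp [cone, hA, hB, hC, hD]) hne
  have hcount : tetCount (cone σ a) ≤ ({s | s ∈ faceSets σ ∧ a ∉ s}).ncard := by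
    refine le_trans (Set.ncard_le_ncard hsub (Set.toFinite _)) (Set.ncard_image_le (Set.toFinite _))
  have hsplit : ({s | s ∈ faceSets σ ∧ a ∉ s}).ncard + (F.filter (a ∈ ·)).card = F.card := by
    rw [show {s | s ∈ faceSets σ ∧ a ∉ s} = ↑(F.filter (a ∉ ·)) by
      ext s; simp [hF], Set.ncard_coe_finset]
    rw [add_comm]
    exact Finset.card_filter_add_card_filter_not (p := fun s => a ∈ s)
  have hdega := hdegF a
  omega
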